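/- arXiv:1812.10258 — 9 statements merged into one kernel-verified Lean document; each statement's English description precedes it below -/
import Mathlib

section
/- The pair (Δ, ε) makes A = A_{h,t} a coassociative counital R-coalgebra: (Δ ⊗ id) ∘ Δ = (id ⊗ Δ) ∘ Δ as maps A → A ⊗[R] A ⊗[R] A, and (ε ⊗ id) ∘ Δ = id = (id ⊗ ε) ∘ Δ under the canonical isomorphisms R ⊗[R] A ≅ A ≅ A ⊗[R] R. -/
open Polynomial
open scoped TensorProduct

/-- The Frobenius algebra `A_{h,t} = R[X]/(X² − h·X − t)`. -/
noncomputable abbrev Aht (R : Type*) [CommRing R] (h t : R) : Type _ :=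
  AdjoinRoot ((X : R[X]) ^ 2 - C h * X - C t)

/-- The image of the variable `X` in `A_{h,t}`. -/
noncomputable def Xht (R : Type*) [CommRing R] (h t : R) : Aht R h t :=
  AdjoinRoot.root _

/-! All three identities are equalities of `R`-linear maps out of `A_{h,t}`, which is free on
`1, X`; so it suffices to check them on `1` and `X`, where they are finite computations with
pure tensors. -/

theorem AdjoinRoot.linearMap_ext_of_monic {R M : Type*} [CommRing R] [AddCommGroup M]
    [Module R M] {g : R[X]} (hg : g.Monic) {φ ψ : AdjoinRoot g →ₗ[R] M}
    (h : ∀ i < g.natDegree, φ (root g ^ i) = ψ (root g ^ i)) : φ = ψ :=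
  (powerBasis' hg).basis.ext fun i => by
    simpa only [PowerBasis.coe_basis, powerBasis'_gen] using h i i.isLt

namespace Aht

variable {R : Type*} [CommRing R] {h t : R}

theorem linearMap_ext {M : Type*} [AddCommGroup M] [Module R M] {φ ψ : Aht R h t →ₗ[R] M}
    (h1 : φ 1 = ψ 1) (hX : φ (Xht R h t) = ψ (Xht R h t)) : φ = ψ := by
  refine AdjoinRoot.linearMap_ext_of_monic (by monicity!) fun i hi => ?_
  have : i < 2 := hi.trans_le (by compute_degree)
  interval_cases i
  · simpa only [pow_zero] using h1
  · rw [pow_one]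
    exact hX

variable {ε : Aht R h t →ₗ[R] R} {Δ : Aht R h t →ₗ[R] Aht R h t ⊗[R] Aht R h t}

open TensorProduct

theorem coassoc
    (hΔ1 : Δ 1 = Xht R h t ⊗ₜ[R] 1 + 1 ⊗ₜ[R] Xht R h t - h • ((1 : Aht R h t) ⊗ₜ[R] 1))
    (hΔX : Δ (Xht R h t) = Xht R h t ⊗ₜ[R] Xht R h t + t • ((1 : Aht R h t) ⊗ₜ[R] 1)) :
    (TensorProduct.assoc R _ _ _).toLinearMap ∘ₗ map Δ LinearMap.id ∘ₗ Δ =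
      map LinearMap.id Δ ∘ₗ Δ := by
  apply linearMap_ext <;>
  · simp only [LinearMap.comp_apply, LinearEquiv.coe_coe, hΔ1, hΔX, map_add, map_sub,
      map_smul, add_tmul, sub_tmul, tmul_add, tmul_sub, ← smul_tmul', tmul_smul,
      map_tmul, LinearMap.id_apply, assoc_tmul, smul_add, smul_sub]
    abel

theorem lid_counit (hε1 : ε 1 = 0) (hεX : ε (Xht R h t) = 1)
    (hΔ1 : Δ 1 = Xht R h t ⊗ₜ[R] 1 + 1 ⊗ₜ[R] Xht R h t - h • ((1 : Aht R h t) ⊗ₜ[R] 1))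
    (hΔX : Δ (Xht R h t) = Xht R h t ⊗ₜ[R] Xht R h t + t • ((1 : Aht R h t) ⊗ₜ[R] 1)) :
    (TensorProduct.lid R _).toLinearMap ∘ₗ map ε LinearMap.id ∘ₗ Δ = LinearMap.id := by
  apply linearMap_ext <;>
  · simp [hΔ1, hΔX, hε1, hεX]

theorem rid_counit (hε1 : ε 1 = 0) (hεX : ε (Xht R h t) = 1)
    (hΔ1 : Δ 1 = Xht R h t ⊗ₜ[R] 1 + 1 ⊗ₜ[R] Xht R h t - h • ((1 : Aht R h t) ⊗ₜ[R] 1))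
    (hΔX : Δ (Xht R h t) = Xht R h t ⊗ₜ[R] Xht R h t + t • ((1 : Aht R h t) ⊗ₜ[R] 1)) :
    (TensorProduct.rid R _).toLinearMap ∘ₗ map LinearMap.id ε ∘ₗ Δ = LinearMap.id := by
  apply linearMap_ext <;>
  · simp [hΔ1, hΔX, hε1, hεX]

end Aht

/-- The pair `(Δ, ε)` makes `A = A_{h,t}` a coassociative
counital `R`-coalgebra: `(Δ ⊗ id) ∘ Δ = (id ⊗ Δ) ∘ Δ` (up to the associator),
and `(ε ⊗ id) ∘ Δ = id = (id ⊗ ε) ∘ Δ` under `R ⊗[R] A ≅ A ≅ A ⊗[R] R`. -/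
theorem stmt3 {R : Type*} [CommRing R] (h t : R)
    (ε : Aht R h t →ₗ[R] R) (hε1 : ε 1 = 0) (hεX : ε (Xht R h t) = 1)
    (Δ : Aht R h t →ₗ[R] Aht R h t ⊗[R] Aht R h t)
    (hΔ1 : Δ 1 = Xht R h t ⊗ₜ[R] 1 + 1 ⊗ₜ[R] Xht R h t - h • ((1 : Aht R h t) ⊗ₜ[R] 1))
    (hΔX : Δ (Xht R h t) = Xht R h t ⊗ₜ[R] Xht R h t + t • ((1 : Aht R h t) ⊗ₜ[R] 1)) :
    (∀ x : Aht R h t,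
      TensorProduct.assoc R (Aht R h t) (Aht R h t) (Aht R h t)
          (TensorProduct.map Δ LinearMap.id (Δ x)) =
        TensorProduct.map LinearMap.id Δ (Δ x)) ∧
    (∀ x : Aht R h t,
      TensorProduct.lid R (Aht R h t) (TensorProduct.map ε LinearMap.id (Δ x)) = x) ∧
    (∀ x : Aht R h t,
      TensorProduct.rid R (Aht R h t) (TensorProduct.map LinearMap.id ε (Δ x)) = x) :=
  ⟨LinearMap.congr_fun (Aht.coassoc hΔ1 hΔX),
    LinearMap.congr_fun (Aht.lid_counit hε1 hεX hΔ1 hΔX),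
    LinearMap.congr_fun (Aht.rid_counit hε1 hεX hΔ1 hΔX)⟩
end

section
/- A = A_{h,t} satisfies the Frobenius relation: Δ ∘ m = (id ⊗ m) ∘ (Δ ⊗ id) = (m ⊗ id) ∘ (id ⊗ Δ) as R-linear maps A ⊗[R] A → A ⊗[R] A, where m : A ⊗[R] A → A is the multiplication map of the R-algebra A. -/
open Polynomial
open scoped TensorProduct

set_option maxHeartbeats 2000000 in
set_option synthInstance.maxHeartbeats 400000 in
set_option maxRecDepth 10000 in
/-- `A = A_{h,t}` satisfies the Frobenius relation:
`Δ ∘ m = (id ⊗ m) ∘ (Δ ⊗ id) = (m ⊗ id) ∘ (id ⊗ Δ)` as `R`-linear maps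
`A ⊗[R] A → A ⊗[R] A`, where `m` is the multiplication of `A`. -/
theorem stmt4 {R : Type*} [CommRing R] (h t : R)
    (ε : Aht R h t →ₗ[R] R) (hε1 : ε 1 = 0) (hεX : ε (Xht R h t) = 1)
    (Δ : Aht R h t →ₗ[R] Aht R h t ⊗[R] Aht R h t)
    (hΔ1 : Δ 1 = Xht R h t ⊗ₜ[R] 1 + 1 ⊗ₜ[R] Xht R h t - h • ((1 : Aht R h t) ⊗ₜ[R] 1))
    (hΔX : Δ (Xht R h t) = Xht R h t ⊗ₜ[R] Xht R h t + t • ((1 : Aht R h t) ⊗ₜ[R] 1)) :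
    (∀ z : Aht R h t ⊗[R] Aht R h t,
      Δ (LinearMap.mul' R (Aht R h t) z) =
        TensorProduct.map LinearMap.id (LinearMap.mul' R (Aht R h t))
          (TensorProduct.assoc R (Aht R h t) (Aht R h t) (Aht R h t)
            (TensorProduct.map Δ LinearMap.id z))) ∧
    (∀ z : Aht R h t ⊗[R] Aht R h t,
      Δ (LinearMap.mul' R (Aht R h t) z) =
        TensorProduct.map (LinearMap.mul' R (Aht R h t)) LinearMap.id
          ((TensorProduct.assoc R (Aht R h t) (Aht R h t) (Aht R h t)).symm
            (TensorProduct.map LinearMap.id Δ z))) := by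
  rcases subsingleton_or_nontrivial R with hR | hR
  · haveI := Module.subsingleton R (Aht R h t ⊗[R] Aht R h t)
    exact ⟨fun z => Subsingleton.elim _ _, fun z => Subsingleton.elim _ _⟩
  -- the polynomial is monic of degree 2
  have hm : ((X : R[X]) ^ 2 - C h * X - C t).Monic := by
    have : (X : R[X]) ^ 2 - C h * X - C t = X ^ 2 - (C h * X + C t) := by ring
    rw [this]
    apply monic_X_pow_sub
    calc (C h * X + C t).degree ≤ max (C h * X).degree (C t).degree := degree_add_le _ _
      _ < 2 := by
        apply max_lt
        · exact lt_of_le_of_lt (degree_C_mul_X_le h) (by norm_num)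
        · exact lt_of_le_of_lt (degree_C_le) (by norm_num)
  have hdeg : ((X : R[X]) ^ 2 - C h * X - C t).natDegree = 2 := by
    compute_degree!
  -- the defining relation of the root
  have hX2 : Xht R h t * Xht R h t = h • Xht R h t + t • (1 : Aht R h t) := by
    have h0 : aeval (Xht R h t) ((X : R[X]) ^ 2 - C h * X - C t) = 0 := by
      rw [Xht, AdjoinRoot.aeval_eq, AdjoinRoot.mk_self]
    simp only [map_sub, map_pow, map_mul, aeval_X, aeval_C] at h0
    rw [Algebra.smul_def, Algebra.smul_def, mul_one]
    linear_combination h0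
  -- the power basis
  set pb := AdjoinRoot.powerBasis' hm with hpb
  have hb : ∀ i : Fin pb.dim, pb.basis i = 1 ∨ pb.basis i = Xht R h t := by
    intro i
    have hi : (i : ℕ) < 2 :=
      lt_of_lt_of_le i.isLt (le_of_eq (by rw [hpb, AdjoinRoot.powerBasis'_dim, hdeg]))
    rw [pb.basis_eq_pow]
    rcases (by omega : (i : ℕ) = 0 ∨ (i : ℕ) = 1) with h0 | h0 <;> rw [h0]
    · left; exact pow_zero _
    · right
      rw [pow_one, hpb, AdjoinRoot.powerBasis'_gen, Xht]
  constructor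
  · -- first Frobenius relation
    have key : ∀ a b : Aht R h t, (a = 1 ∨ a = Xht R h t) → (b = 1 ∨ b = Xht R h t) →
        Δ (LinearMap.mul' R (Aht R h t) (a ⊗ₜ[R] b)) =
          TensorProduct.map LinearMap.id (LinearMap.mul' R (Aht R h t))
            (TensorProduct.assoc R (Aht R h t) (Aht R h t) (Aht R h t)
              (TensorProduct.map Δ LinearMap.id (a ⊗ₜ[R] b))) := by
      rintro a b (rfl | rfl) (rfl | rfl) <;>
        simp only [LinearMap.mul'_apply, TensorProduct.map_tmul, LinearMap.id_coe, id_eq,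
          one_mul, mul_one, hΔ1, hΔX, hX2, map_add, map_sub, map_smul,
          TensorProduct.assoc_tmul, TensorProduct.add_tmul, TensorProduct.sub_tmul,
          TensorProduct.smul_tmul, TensorProduct.tmul_add,
          TensorProduct.tmul_smul, TensorProduct.tmul_sub] <;>
        module
    have heq : (Δ ∘ₗ LinearMap.mul' R (Aht R h t)) =
        (TensorProduct.map LinearMap.id (LinearMap.mul' R (Aht R h t))) ∘ₗ
          (TensorProduct.assoc R (Aht R h t) (Aht R h t) (Aht R h t)).toLinearMap ∘ₗ
            TensorProduct.map Δ LinearMap.id := by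
      apply (pb.basis.tensorProduct pb.basis).ext
      rintro ⟨i, j⟩
      rw [Module.Basis.tensorProduct_apply]
      simpa only [LinearMap.comp_apply, LinearEquiv.coe_coe] using
        key _ _ (hb i) (hb j)
    intro z
    exact DFunLike.congr_fun heq z
  · -- second Frobenius relation
    have key : ∀ a b : Aht R h t, (a = 1 ∨ a = Xht R h t) → (b = 1 ∨ b = Xht R h t) →
        Δ (LinearMap.mul' R (Aht R h t) (a ⊗ₜ[R] b)) =
          TensorProduct.map (LinearMap.mul' R (Aht R h t)) LinearMap.id
            ((TensorProduct.assoc R (Aht R h t) (Aht R h t) (Aht R h t)).symm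
              (TensorProduct.map LinearMap.id Δ (a ⊗ₜ[R] b))) := by
      rintro a b (rfl | rfl) (rfl | rfl) <;>
        simp only [LinearMap.mul'_apply, TensorProduct.map_tmul, LinearMap.id_coe, id_eq,
          one_mul, mul_one, hΔ1, hΔX, hX2, map_add, map_sub, map_smul,
          TensorProduct.assoc_symm_tmul, TensorProduct.add_tmul, TensorProduct.sub_tmul,
          TensorProduct.smul_tmul, TensorProduct.tmul_add,
          TensorProduct.tmul_smul, TensorProduct.tmul_sub] <;>
        module
    have heq : (Δ ∘ₗ LinearMap.mul' R (Aht R h t)) =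
        (TensorProduct.map (LinearMap.mul' R (Aht R h t)) LinearMap.id) ∘ₗ
          (TensorProduct.assoc R (Aht R h t) (Aht R h t) (Aht R h t)).symm.toLinearMap ∘ₗ
            TensorProduct.map LinearMap.id Δ := by
      apply (pb.basis.tensorProduct pb.basis).ext
      rintro ⟨i, j⟩
      rw [Module.Basis.tensorProduct_apply]
      simpa only [LinearMap.comp_apply, LinearEquiv.coe_coe] using
        key _ _ (hb i) (hb j)
    intro z
    exact DFunLike.congr_fun heq z
end

section
/- If c = v − u is a unit of R, then e₁ := c⁻¹·a and e₂ := −c⁻¹·b are orthogonal idempotents of A = A_{h,t} with e₁·e₂ = 0 and e₁ + e₂ = 1, and the R-algebra homomorphism A → R × R induced by the two evaluations X ↦ u and X ↦ v is an isomorphism of R-algebras. -/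
/-! Since `(x - u)(x - v) = 0` and `c = v - u` is a unit, `e₁ = c⁻¹(x - u)` and
`e₂ = -c⁻¹(x - v)` multiply to `0` and sum to `1`. Multiplication by `x` acts on `e₁` by `v` and
on `e₂` by `u`, so `p(x) = p(x)(e₁ + e₂) = p(v) e₁ + p(u) e₂` for every polynomial `p`: the map
`(r, s) ↦ s e₁ + r e₂` inverts the evaluation `p(x) ↦ (p(u), p(v))`. -/

open Polynomial

theorem X_sq_sub_C_mul_X_sub_C_eq_mul {R : Type*} [CommRing R] {h t u v : R}
    (huv : u + v = h) (hmul : u * v = -t) :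
    (X : R[X]) ^ 2 - C h * X - C t = (X - C u) * (X - C v) := by
  obtain rfl : t = -(u * v) := by rw [hmul, neg_neg]
  subst huv
  simp only [map_add, map_neg, map_mul]
  ring

section Algebra

variable {R A : Type*} [CommRing R] [CommRing A] [Algebra R A]

theorem aeval_mul_eq_of_sub_mul_eq_zero {x e : A} {r : R}
    (h : (x - algebraMap R A r) * e = 0) (p : R[X]) :
    aeval x p * e = algebraMap R A (p.eval r) * e := by
  obtain ⟨q, hq⟩ := X_sub_C_dvd_sub_C_eval (a := r) (p := p)
  rw [← sub_eq_zero, ← sub_mul, ← aeval_C, ← map_sub, hq, map_mul, map_sub, aeval_X, aeval_C,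
    mul_right_comm, h, zero_mul]

variable {x : A} {u v cinv : R}

theorem smul_sub_add_neg_smul_sub_eq_one (hc : (v - u) * cinv = 1) :
    cinv • (x - algebraMap R A u) + -(cinv • (x - algebraMap R A v)) = 1 := by
  rw [← sub_eq_add_neg, ← smul_sub, sub_sub_sub_cancel_left, ← map_sub, Algebra.smul_def,
    ← map_mul, mul_comm, hc, map_one]

theorem smul_sub_mul_neg_smul_sub_eq_zero
    (hx : (x - algebraMap R A u) * (x - algebraMap R A v) = 0) :
    cinv • (x - algebraMap R A u) * -(cinv • (x - algebraMap R A v)) = 0 := by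
  rw [mul_neg, smul_mul_smul_comm, hx, smul_zero, neg_zero]

theorem completeOrthogonalIdempotents_smul_sub
    (hx : (x - algebraMap R A u) * (x - algebraMap R A v) = 0) (hc : (v - u) * cinv = 1) :
    CompleteOrthogonalIdempotents
      ![cinv • (x - algebraMap R A u), -(cinv • (x - algebraMap R A v))] :=
  CompleteOrthogonalIdempotents.pair_iffₛ.mpr
    ⟨smul_sub_mul_neg_smul_sub_eq_zero hx, smul_sub_add_neg_smul_sub_eq_one hc⟩

theorem aeval_eq_eval_smul_add_eval_smul
    (hx : (x - algebraMap R A u) * (x - algebraMap R A v) = 0) (hc : (v - u) * cinv = 1)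
    (p : R[X]) :
    aeval x p = p.eval v • cinv • (x - algebraMap R A u)
      + p.eval u • -(cinv • (x - algebraMap R A v)) := by
  have hv : (x - algebraMap R A v) * (cinv • (x - algebraMap R A u)) = 0 := by
    rw [mul_smul_comm, mul_comm, hx, smul_zero]
  have hu : (x - algebraMap R A u) * -(cinv • (x - algebraMap R A v)) = 0 := by
    rw [mul_neg, mul_smul_comm, hx, smul_zero, neg_zero]
  calc aeval x p
      = aeval x p * (cinv • (x - algebraMap R A u) + -(cinv • (x - algebraMap R A v))) := by
        rw [smul_sub_add_neg_smul_sub_eq_one hc, mul_one]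
    _ = _ := by
        rw [mul_add, aeval_mul_eq_of_sub_mul_eq_zero hv, aeval_mul_eq_of_sub_mul_eq_zero hu,
          ← Algebra.smul_def, ← Algebra.smul_def]

end Algebra

namespace AdjoinRoot

variable {R : Type*} [CommRing R] {f : R[X]} {u v : R}

theorem root_sub_mul_root_sub_eq_zero (hf : f = (X - C u) * (X - C v)) :
    (root f - algebraMap R (AdjoinRoot f) u) * (root f - algebraMap R (AdjoinRoot f) v) = 0 := by
  have : mk f ((X - C u) * (X - C v)) = 0 := mk_eq_zero.mpr (hf ▸ dvd_rfl)
  simpa [algebraMap_eq] using this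

noncomputable def evalPair (hf : f = (X - C u) * (X - C v)) : AdjoinRoot f →ₐ[R] R × R :=
  liftAlgHom f (Algebra.ofId R (R × R)) (u, v) <| by
    change aeval (u, v) f = 0
    rw [aeval_prod_apply, hf]
    simp

theorem evalPair_mk (hf : f = (X - C u) * (X - C v)) (p : R[X]) :
    evalPair hf (mk f p) = (p.eval u, p.eval v) := by
  change aeval (u, v) p = _
  rw [aeval_prod_apply, coe_aeval_eq_eval, coe_aeval_eq_eval]

theorem evalPair_root (hf : f = (X - C u) * (X - C v)) : evalPair hf (root f) = (u, v) :=
  liftAlgHom_root ..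

variable {cinv : R}

theorem eq_smul_add_smul_of_evalPair (hf : f = (X - C u) * (X - C v)) (hc : (v - u) * cinv = 1)
    (z : AdjoinRoot f) :
    z = (evalPair hf z).2 • cinv • (root f - algebraMap R (AdjoinRoot f) u)
      + (evalPair hf z).1 • -(cinv • (root f - algebraMap R (AdjoinRoot f) v)) := by
  induction z using induction_on with
  | ih p =>
    rw [evalPair_mk, ← aeval_eq]
    exact aeval_eq_eval_smul_add_eval_smul (root_sub_mul_root_sub_eq_zero hf) hc p

theorem evalPair_bijective (hf : f = (X - C u) * (X - C v)) (hc : (v - u) * cinv = 1) :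
    Function.Bijective (evalPair hf) := by
  refine Function.bijective_iff_has_inverse.mpr
    ⟨fun p ↦ p.2 • cinv • (root f - algebraMap R (AdjoinRoot f) u)
      + p.1 • -(cinv • (root f - algebraMap R (AdjoinRoot f) v)),
      fun z ↦ (eq_smul_add_smul_of_evalPair hf hc z).symm, fun p ↦ ?_⟩
  have hc' : cinv * (v - u) = 1 := by rw [mul_comm, hc]
  simp only [map_add, map_smul, map_neg, map_sub, evalPair_root, AlgHom.commutes]
  ext <;> simp [hc', ← mul_neg]

end AdjoinRoot

/-- If `c = v − u` is a unit of `R` (with inverse `cinv`), then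
`e₁ = c⁻¹·a` and `e₂ = −c⁻¹·b` are orthogonal idempotents of `A = A_{h,t}` with
`e₁·e₂ = 0` and `e₁ + e₂ = 1`, and the `R`-algebra homomorphism `A → R × R`
induced by the two evaluations `X ↦ u` and `X ↦ v` is an isomorphism. -/
theorem stmt6 {R : Type*} [CommRing R] (h t u v c cinv : R)
    (huv : u + v = h) (hmul : u * v = -t) (hc : c = v - u) (hcu : c * cinv = 1)
    (a b e₁ e₂ : Aht R h t)
    (ha : a = Xht R h t - algebraMap R (Aht R h t) u)
    (hb : b = Xht R h t - algebraMap R (Aht R h t) v)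
    (he₁ : e₁ = cinv • a) (he₂ : e₂ = -(cinv • b)) :
    e₁ * e₁ = e₁ ∧ e₂ * e₂ = e₂ ∧ e₁ * e₂ = 0 ∧ e₁ + e₂ = 1 ∧
      ∃ φ : Aht R h t →ₐ[R] R × R, φ (Xht R h t) = (u, v) ∧ Function.Bijective φ := by
  subst hc ha hb he₁ he₂
  have hf := X_sq_sub_C_mul_X_sub_C_eq_mul huv hmul
  have hx := AdjoinRoot.root_sub_mul_root_sub_eq_zero hf
  have hidem := completeOrthogonalIdempotents_smul_sub hx hcu
  exact ⟨(hidem.idem 0).eq, (hidem.idem 1).eq, smul_sub_mul_neg_smul_sub_eq_zero hx,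
    smul_sub_add_neg_smul_sub_eq_one hcu, AdjoinRoot.evalPair hf, AdjoinRoot.evalPair_root hf,
    AdjoinRoot.evalPair_bijective hf hcu⟩
end

section
/- Let B(x, y) := ε(x·y) on A = A_{h,t}, and let B^{⊗r} denote the induced R-bilinear form on the r-fold tensor power A^{⊗r} (determined by B^{⊗r}(⊗ᵢ xᵢ, ⊗ᵢ yᵢ) = ∏ᵢ B(xᵢ, yᵢ)). For a function w : Fin r → {a, b} let α_w = ⊗ᵢ w(i) ∈ A^{⊗r} and let β_w = ⊗ᵢ w̄(i), where w̄ is obtained from w by exchanging a and b in every position. Then B^{⊗r}(α_w, α_w) = (−1)^{n_b(w)}·c^r, where n_b(w) is the number of positions i with w(i) = b, and if r ≥ 1 then B^{⊗r}(α_w, β_w) = 0. -/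
open Polynomial
open scoped TensorProduct

lemma Xht_sq {R : Type*} [CommRing R] (h t : R) :
    Xht R h t ^ 2 = algebraMap R (Aht R h t) h * Xht R h t + algebraMap R (Aht R h t) t := by
  have key := AdjoinRoot.eval₂_root ((X : R[X]) ^ 2 - C h * X - C t)
  simp only [eval₂_sub, eval₂_mul, eval₂_pow, eval₂_C, eval₂_X] at key
  rw [AdjoinRoot.algebraMap_eq]
  unfold Xht
  linear_combination key

/-- Let `B(x,y) = ε(x·y)` on `A = A_{h,t}` and let `Br` be the
induced bilinear form on the `r`-fold tensor power (determined by
`Br(⊗ᵢ xᵢ, ⊗ᵢ yᵢ) = ∏ᵢ B(xᵢ, yᵢ)`).  For `w : Fin r → {a, b}` let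
`α_w = ⊗ᵢ w(i)` and `β_w = ⊗ᵢ w̄(i)`, `w̄` exchanging `a` and `b`.  Then
`Br(α_w, α_w) = (−1)^{n_b(w)}·c^r`, and if `r ≥ 1` then `Br(α_w, β_w) = 0`. -/
theorem stmt9 {R : Type*} [CommRing R] (h t u v c : R)
    (huv : u + v = h) (hmul : u * v = -t) (hc : c = v - u)
    (ε : Aht R h t →ₗ[R] R) (hε1 : ε 1 = 0) (hεX : ε (Xht R h t) = 1)
    (a b : Aht R h t)
    (ha : a = Xht R h t - algebraMap R (Aht R h t) u)
    (hb : b = Xht R h t - algebraMap R (Aht R h t) v)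
    (r : ℕ)
    (Br : (⨂[R] _ : Fin r, Aht R h t) →ₗ[R] (⨂[R] _ : Fin r, Aht R h t) →ₗ[R] R)
    (hBr : ∀ x y : Fin r → Aht R h t,
      Br (⨂ₜ[R] i, x i) (⨂ₜ[R] i, y i) = ∏ i, ε (x i * y i))
    (w wbar : Fin r → Aht R h t)
    (hw : ∀ i, w i = a ∨ w i = b)
    (hwbar : ∀ i, (w i = a → wbar i = b) ∧ (w i = b → wbar i = a)) :
    Br (⨂ₜ[R] i, w i) (⨂ₜ[R] i, w i) =
        (-1 : R) ^ ({i | w i = b}.ncard) * c ^ r ∧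
      (1 ≤ r → Br (⨂ₜ[R] i, w i) (⨂ₜ[R] i, wbar i) = 0) := by
  have hX2 := Xht_sq h t (R := R)
  have hU : algebraMap R (Aht R h t) u + algebraMap R (Aht R h t) v = algebraMap R (Aht R h t) h := by
    rw [← map_add, huv]
  have hUV : algebraMap R (Aht R h t) u * algebraMap R (Aht R h t) v = - algebraMap R (Aht R h t) t := by
    rw [← map_mul, hmul, map_neg]
  -- a * b = 0
  have hab : a * b = 0 := by
    rw [ha, hb]
    linear_combination hX2 - Xht R h t * hU + hUV
  -- a * a
  have ha2 : a * a = (h - 2 * u) • Xht R h t + (t + u * u) • (1 : Aht R h t) := by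
    rw [ha, Algebra.smul_def, Algebra.smul_def, mul_one, map_sub, map_add, map_mul,
      map_mul, map_ofNat]
    linear_combination hX2
  have hb2 : b * b = (h - 2 * v) • Xht R h t + (t + v * v) • (1 : Aht R h t) := by
    rw [hb, Algebra.smul_def, Algebra.smul_def, mul_one, map_sub, map_add, map_mul,
      map_mul, map_ofNat]
    linear_combination hX2
  have hεa2 : ε (a * a) = c := by
    rw [ha2, map_add, map_smul, map_smul, hεX, hε1, smul_eq_mul, smul_eq_mul, hc]
    linear_combination -huv
  have hεb2 : ε (b * b) = -c := by
    rw [hb2, map_add, map_smul, map_smul, hεX, hε1, smul_eq_mul, smul_eq_mul, hc]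
    linear_combination -huv
  constructor
  · rw [hBr]
    have hfac : ∀ i, ε (w i * w i) = if w i = b then -c else c := by
      intro i
      by_cases hib : w i = b
      · rw [if_pos hib, hib, hεb2]
      · rcases hw i with hia | hib'
        · rw [if_neg hib, hia, hεa2]
        · exact absurd hib' hib
    have hcard : {i | w i = b}.ncard = (Finset.univ.filter (fun i => w i = b)).card := by
      rw [← Set.ncard_coe_finset]
      congr 1
      ext i; simp
    calc (∏ i, ε (w i * w i))
        = ∏ i, ((if w i = b then (-1 : R) else 1) * c) := by
          refine Finset.prod_congr rfl fun i _ => ?_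
          rw [hfac i]; split_ifs <;> ring
      _ = (∏ i, (if w i = b then (-1 : R) else 1)) * c ^ r := by
          rw [Finset.prod_mul_distrib, Finset.prod_const, Finset.card_univ, Fintype.card_fin]
      _ = (-1 : R) ^ ({i | w i = b}.ncard) * c ^ r := by
          rw [Finset.prod_ite, Finset.prod_const, Finset.prod_const, one_pow, mul_one, hcard]
  · intro hr
    rw [hBr]
    refine Finset.prod_eq_zero (Finset.mem_univ (⟨0, hr⟩ : Fin r)) ?_
    rcases hw ⟨0, hr⟩ with hia | hib
    · rw [hia, (hwbar ⟨0, hr⟩).1 hia, hab, map_zero]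
    · rw [hib, (hwbar ⟨0, hr⟩).2 hib, mul_comm b a, hab, map_zero]
end

section
/- Let R be a commutative ring, u, v, u′, v′ ∈ R, and θ a unit of R with v − u = θ·(v′ − u′). Then the R-algebra homomorphism R[X] → R[X]/((X − u′)(X − v′)) determined by X ↦ θ·(X − u′) + u descends to an R-algebra isomorphism f : R[X]/((X − u)(X − v)) ≅ R[X]/((X − u′)(X − v′)), and f maps the colors as f(X − u) = θ·(X − u′) and f(X − v) = θ·(X − v′). -/
/-!
The affine substitution `X ↦ θ • (X - u') + u` is an automorphism of `R[X]` because `θ` is a unit,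
and, since `v - u = θ • (v' - u')`, it sends `(X - u) * (X - v)` to `θ ^ 2 • (X - u') * (X - v')`.
An automorphism of `R[X]` carrying one polynomial to an associate of another identifies the
principal ideals they generate, hence descends to the quotients.
-/

open Polynomial

namespace AdjoinRoot

variable {R : Type*} [CommRing R]

noncomputable def algEquivOfPolynomialAlgEquiv (e : R[X] ≃ₐ[R] R[X]) {p q : R[X]}
    (h : Associated (e p) q) : AdjoinRoot p ≃ₐ[R] AdjoinRoot q :=
  Ideal.quotientEquivAlg _ _ e <| by
    obtain ⟨w, rfl⟩ := h
    rw [Ideal.map_span, Set.image_singleton]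
    exact Ideal.span_singleton_mul_right_unit w.isUnit _

theorem algEquivOfPolynomialAlgEquiv_root (e : R[X] ≃ₐ[R] R[X]) {p q : R[X]}
    (h : Associated (e p) q) :
    algEquivOfPolynomialAlgEquiv e h (root p) = mk q (e X) :=
  rfl

end AdjoinRoot

theorem Polynomial.aeval_C_mul_X_add_C_mul_X_sub_C {R : Type*} [CommRing R] {u v u' v' θ : R}
    (hc : v - u = θ * (v' - u')) :
    aeval (C θ * X + C (u - θ * u')) ((X - C u) * (X - C v)) =
      C (θ ^ 2) * ((X - C u') * (X - C v')) := by
  have hv : v = u + θ * (v' - u') := by rw [← hc]; ring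
  simp only [map_mul, map_sub, aeval_X, aeval_C, algebraMap_eq, hv, map_add, map_pow]
  ring

open AdjoinRoot in
/-- Let `R` be a commutative ring, `u, v, u′, v′ ∈ R`, and `θ`
a unit of `R` with `v − u = θ·(v′ − u′)`. Then `X ↦ θ·(X − u′) + u` descends to
an `R`-algebra isomorphism `f : R[X]/((X−u)(X−v)) ≅ R[X]/((X−u′)(X−v′))`, and
`f` maps the colors as `f(X − u) = θ·(X − u′)` and `f(X − v) = θ·(X − v′)`. -/
theorem stmt10 {R : Type*} [CommRing R] (u v u' v' θ : R) (hθ : IsUnit θ)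
    (hc : v - u = θ * (v' - u')) :
    ∃ f : AdjoinRoot ((X - C u) * (X - C v)) ≃ₐ[R]
          AdjoinRoot ((X - C u') * (X - C v')),
      f (AdjoinRoot.root ((X - C u) * (X - C v))) =
          θ • AdjoinRoot.root ((X - C u') * (X - C v'))
            - algebraMap R (AdjoinRoot ((X - C u') * (X - C v'))) (θ * u')
            + algebraMap R (AdjoinRoot ((X - C u') * (X - C v'))) u ∧
        f (AdjoinRoot.root ((X - C u) * (X - C v))
              - algebraMap R (AdjoinRoot ((X - C u) * (X - C v))) u) =
          θ • (AdjoinRoot.root ((X - C u') * (X - C v'))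
              - algebraMap R (AdjoinRoot ((X - C u') * (X - C v'))) u') ∧
        f (AdjoinRoot.root ((X - C u) * (X - C v))
              - algebraMap R (AdjoinRoot ((X - C u) * (X - C v))) v) =
          θ • (AdjoinRoot.root ((X - C u') * (X - C v'))
              - algebraMap R (AdjoinRoot ((X - C u') * (X - C v'))) v') := by
  let := hθ.invertible
  set q := (X - C u') * (X - C v')
  have hassoc : Associated (algEquivCMulXAddC θ (u - θ * u') ((X - C u) * (X - C v))) q := by
    rw [algEquivCMulXAddC_apply, aeval_C_mul_X_add_C_mul_X_sub_C hc]
    exact associated_unit_mul_left _ _ (isUnit_C.mpr (hθ.pow 2))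
  obtain ⟨f, hroot⟩ : ∃ f : AdjoinRoot ((X - C u) * (X - C v)) ≃ₐ[R] AdjoinRoot q,
      f (root _) = θ • root q - algebraMap R _ (θ * u') + algebraMap R _ u := by
    refine ⟨algEquivOfPolynomialAlgEquiv _ hassoc, ?_⟩
    rw [algEquivOfPolynomialAlgEquiv_root, algEquivCMulXAddC_apply, aeval_X, Algebra.smul_def,
      AdjoinRoot.algebraMap_eq]
    simp only [map_add, map_mul, map_sub, mk_C, mk_X]
    ring
  have hv : algebraMap R (AdjoinRoot q) v = algebraMap R _ (u + θ * (v' - u')) := by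
    rw [← hc, add_sub_cancel]
  refine ⟨f, hroot, ?_, ?_⟩
  · rw [map_sub, hroot, AlgEquiv.commutes, Algebra.smul_def, Algebra.smul_def, map_mul]
    ring
  · rw [map_sub, hroot, AlgEquiv.commutes, hv, Algebra.smul_def, Algebra.smul_def, map_add,
      map_mul, map_mul, map_sub]
    ring
end

section
/- Let R be a commutative ring, u, v, u′, v′ ∈ R, and θ a unit of R with v − u = θ·(v′ − u′). Set h = u + v, t = −u·v, h′ = u′ + v′, t′ = −u′·v′, let A = R[X]/((X − u)(X − v)) and A′ = R[X]/((X − u′)(X − v′)) with counits ε, ε′ and comultiplications Δ, Δ′ defined on the bases (1, X) as usual, and let f : A → A′ be the R-algebra isomorphism determined by X ↦ θ·(X − u′) + u. Then for every x ∈ A: ε′(θ⁻¹·f(x)) = ε(x) and (f ⊗ f)(Δ(x)) = Δ′(θ·f(x)). In other words, f is an isomorphism of Frobenius algebras from A onto the θ⁻¹-twist of A′. -/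
/-! Both identities compare `R`-linear maps out of `A`, which is spanned by `1` and `X`, so it
suffices to check them on these two elements. There `f X = θ X' + (u - θ u')`, and after
eliminating `v = u + θ (v' - u')` each check is a polynomial identity in `u, u', v', θ`. -/

open Polynomial
open scoped TensorProduct

/-- The algebra `R[X]/((X − u)(X − v))`. -/
noncomputable abbrev Auv (R : Type*) [CommRing R] (u v : R) : Type _ :=
  AdjoinRoot ((X - C u) * (X - C v))

/-- The image of the variable `X` in `R[X]/((X − u)(X − v))`. -/
noncomputable def rootUv (R : Type*) [CommRing R] (u v : R) : Auv R u v :=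
  AdjoinRoot.root _

theorem AdjoinRoot.linearMap_ext_of_natDegree_le_two {R M : Type*} [CommRing R]
    [AddCommMonoid M] [Module R M] {g : R[X]} (hg : g.Monic) (h2 : g.natDegree ≤ 2)
    {φ ψ : AdjoinRoot g →ₗ[R] M} (h1 : φ 1 = ψ 1) (hroot : φ (root g) = ψ (root g)) :
    φ = ψ := by
  refine (AdjoinRoot.powerBasis' hg).basis.ext fun i => ?_
  rw [PowerBasis.coe_basis, AdjoinRoot.powerBasis'_gen]
  obtain ⟨i, hi⟩ := i
  obtain rfl | rfl : i = 0 ∨ i = 1 := by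
    have : i < 2 := hi.trans_le (by simpa using h2)
    omega
  · simpa using h1
  · simpa using hroot

theorem Auv.linearMap_ext {R M : Type*} [CommRing R] [AddCommMonoid M] [Module R M]
    {u v : R} {φ ψ : Auv R u v →ₗ[R] M} (h1 : φ 1 = ψ 1)
    (hroot : φ (rootUv R u v) = ψ (rootUv R u v)) : φ = ψ :=
  AdjoinRoot.linearMap_ext_of_natDegree_le_two ((monic_X_sub_C u).mul (monic_X_sub_C v))
    (natDegree_mul_le.trans (add_le_add (natDegree_X_sub_C_le u) (natDegree_X_sub_C_le v)))
    h1 hroot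

/-- With `h = u + v`, `t = −u·v`, `h′ = u′ + v′`, `t′ = −u′·v′`,
`A = R[X]/((X−u)(X−v))`, `A′ = R[X]/((X−u′)(X−v′))` with the usual counits and
comultiplications, `θ` a unit with `v − u = θ·(v′ − u′)`, and `f : A ≅ A′` the
`R`-algebra isomorphism determined by `X ↦ θ·(X − u′) + u`: for every `x ∈ A`,
`ε′(θ⁻¹·f(x)) = ε(x)` and `(f ⊗ f)(Δ(x)) = Δ′(θ·f(x))`; i.e. `f` is an
isomorphism of Frobenius algebras from `A` onto the `θ⁻¹`-twist of `A′`. -/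
theorem stmt11 {R : Type*} [CommRing R] (u v u' v' θ θinv : R)
    (hθ : θ * θinv = 1) (hc : v - u = θ * (v' - u'))
    (ε : Auv R u v →ₗ[R] R)
    (hε1 : ε 1 = 0) (hεX : ε (rootUv R u v) = 1)
    (Δ : Auv R u v →ₗ[R] Auv R u v ⊗[R] Auv R u v)
    (hΔ1 : Δ 1 = rootUv R u v ⊗ₜ[R] 1 + 1 ⊗ₜ[R] rootUv R u v
        - (u + v) • ((1 : Auv R u v) ⊗ₜ[R] 1))
    (hΔX : Δ (rootUv R u v) = rootUv R u v ⊗ₜ[R] rootUv R u v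
        + (-(u * v)) • ((1 : Auv R u v) ⊗ₜ[R] 1))
    (ε' : Auv R u' v' →ₗ[R] R)
    (hε'1 : ε' 1 = 0) (hε'X : ε' (rootUv R u' v') = 1)
    (Δ' : Auv R u' v' →ₗ[R] Auv R u' v' ⊗[R] Auv R u' v')
    (hΔ'1 : Δ' 1 = rootUv R u' v' ⊗ₜ[R] 1 + 1 ⊗ₜ[R] rootUv R u' v'
        - (u' + v') • ((1 : Auv R u' v') ⊗ₜ[R] 1))
    (hΔ'X : Δ' (rootUv R u' v') = rootUv R u' v' ⊗ₜ[R] rootUv R u' v'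
        + (-(u' * v')) • ((1 : Auv R u' v') ⊗ₜ[R] 1))
    (f : Auv R u v ≃ₐ[R] Auv R u' v')
    (hf : f (rootUv R u v) = θ • rootUv R u' v'
        - algebraMap R (Auv R u' v') (θ * u') + algebraMap R (Auv R u' v') u) :
    (∀ x, ε' (θinv • f x) = ε x) ∧
      (∀ x, TensorProduct.map f.toLinearMap f.toLinearMap (Δ x) = Δ' (θ • f x)) := by
  have hfX : f (rootUv R u v) = θ • rootUv R u' v' + (u - θ * u') • 1 := by
    rw [hf, Algebra.algebraMap_eq_smul_one, Algebra.algebraMap_eq_smul_one, sub_smul]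
    abel
  obtain rfl : v = u + θ * (v' - u') := by linear_combination hc
  have hcounit : ε'.comp (θinv • f.toLinearMap) = ε := by
    refine Auv.linearMap_ext ?_ ?_ <;>
      simp [hfX, hε1, hεX, hε'1, hε'X, mul_comm θinv, hθ]
  have hcomul : (TensorProduct.map f.toLinearMap f.toLinearMap).comp Δ
      = Δ'.comp (θ • f.toLinearMap) := by
    refine Auv.linearMap_ext ?_ ?_ <;>
    · simp only [LinearMap.comp_apply, LinearMap.smul_apply, AlgEquiv.toLinearMap_apply, map_one,
        hfX, hΔ1, hΔX, hΔ'1, hΔ'X, map_add, map_sub, map_smul, TensorProduct.map_tmul,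
        TensorProduct.tmul_add, TensorProduct.add_tmul, ← TensorProduct.smul_tmul',
        TensorProduct.tmul_smul, smul_add, smul_sub, smul_smul]
      match_scalars <;> ring
  exact ⟨LinearMap.congr_fun hcounit, LinearMap.congr_fun hcomul⟩
end

section
/- Let ρ : A → A ⊗[R] A be the R-linear map determined on the basis (1, X) of A = A_{h,t} by ρ(1) = 1 ⊗ X − X ⊗ 1 and ρ(X) = X ⊗ X − h·(X ⊗ 1) − t·(1 ⊗ 1). Then under the factorization hypothesis, ρ(a) = a ⊗ b and ρ(b) = b ⊗ a. -/
open Polynomial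
open scoped TensorProduct

/-- Let `ρ : A → A ⊗[R] A` be the `R`-linear map determined on
the basis `(1, X)` of `A = A_{h,t}` by `ρ(1) = 1 ⊗ X − X ⊗ 1` and
`ρ(X) = X ⊗ X − h·(X ⊗ 1) − t·(1 ⊗ 1)`.  Then under the factorization
hypothesis, `ρ(a) = a ⊗ b` and `ρ(b) = b ⊗ a`. -/
theorem stmt13 {R : Type*} [CommRing R] (h t u v c : R)
    (huv : u + v = h) (hmul : u * v = -t) (hc : c = v - u)
    (a b : Aht R h t)
    (ha : a = Xht R h t - algebraMap R (Aht R h t) u)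
    (hb : b = Xht R h t - algebraMap R (Aht R h t) v)
    (ρ : Aht R h t →ₗ[R] Aht R h t ⊗[R] Aht R h t)
    (hρ1 : ρ 1 = (1 : Aht R h t) ⊗ₜ[R] Xht R h t - Xht R h t ⊗ₜ[R] 1)
    (hρX : ρ (Xht R h t) = Xht R h t ⊗ₜ[R] Xht R h t
        - h • (Xht R h t ⊗ₜ[R] (1 : Aht R h t))
        - t • ((1 : Aht R h t) ⊗ₜ[R] (1 : Aht R h t))) :
    ρ a = a ⊗ₜ[R] b ∧ ρ b = b ⊗ₜ[R] a := by
  have key : ∀ w z : R, w + z = h → w * z = -t →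
      ρ (Xht R h t - algebraMap R (Aht R h t) w)
        = (Xht R h t - algebraMap R (Aht R h t) w)
            ⊗ₜ[R] (Xht R h t - algebraMap R (Aht R h t) z) := by
    intro w z hwz hwzmul
    have halg : ∀ r : R, (algebraMap R (Aht R h t) r) = r • (1 : Aht R h t) :=
      fun r => Algebra.algebraMap_eq_smul_one r
    have htt : t = -(w * z) := by rw [hwzmul, neg_neg]
    subst hwz htt
    rw [halg w, halg z, map_sub, map_smul, hρ1, hρX]
    simp only [TensorProduct.sub_tmul, TensorProduct.tmul_sub, TensorProduct.tmul_smul,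
      ← TensorProduct.smul_tmul', smul_smul, smul_sub]
    match_scalars <;> ring
  refine ⟨?_, ?_⟩
  · rw [ha, hb]; exact key u v huv hmul
  · rw [ha, hb]
    exact key v u (by rw [add_comm]; exact huv) (by rw [mul_comm]; exact hmul)
end

section
/- Let R be an integral domain, c ∈ R a prime element, and M, M′ free R-modules. If x ∈ M with x ∉ c • M and y ∈ M′ with y ∉ c • M′, then x ⊗ y ∉ c • (M ⊗[R] M′). -/
open scoped TensorProduct

/-! In bases `b`, `b'` of `M`, `M'`, the coordinate of `x ⊗ y` at `(i, j)` in the product basis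
is `b.repr x i * b'.repr y j`. Divisibility by `c` in a free module can be read off coordinates,
so some coordinate of `x` and some coordinate of `y` are not divisible by `c`, and primality
of `c` shows that their product is not divisible by `c` either. -/

theorem Module.Basis.exists_eq_smul_of_forall_dvd_repr {R M ι : Type*} [CommSemiring R]
    [AddCommMonoid M] [Module R M] (b : Module.Basis ι R M) {c : R} {x : M}
    (h : ∀ i, c ∣ b.repr x i) : ∃ m : M, x = c • m := by
  choose a ha using h
  refine ⟨(b.repr x).sum fun i _ => a i • b i, ?_⟩
  conv_lhs => rw [← b.linearCombination_repr x, Finsupp.linearCombination_apply]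
  rw [Finsupp.smul_sum]
  exact Finsupp.sum_congr fun i _ => by rw [smul_smul, ← ha]

theorem stmt16_general {R : Type*} [CommRing R] (c : R) (hc : Prime c)
    {M M' : Type*} [AddCommGroup M] [Module R M] [AddCommGroup M'] [Module R M']
    [Module.Free R M] [Module.Free R M']
    (x : M) (y : M')
    (hx : ¬∃ m : M, x = c • m) (hy : ¬∃ m : M', y = c • m) :
    ¬∃ w : M ⊗[R] M', x ⊗ₜ[R] y = c • w := by
  let b := Module.Free.chooseBasis R M
  let b' := Module.Free.chooseBasis R M'
  obtain ⟨i, hi⟩ : ∃ i, ¬c ∣ b.repr x i :=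
    not_forall.mp (mt b.exists_eq_smul_of_forall_dvd_repr hx)
  obtain ⟨j, hj⟩ : ∃ j, ¬c ∣ b'.repr y j :=
    not_forall.mp (mt b'.exists_eq_smul_of_forall_dvd_repr hy)
  rintro ⟨w, hw⟩
  have hdvd : c ∣ b'.repr y j * b.repr x i :=
    ⟨(b.tensorProduct b').repr w (i, j), by
      rw [← smul_eq_mul, ← Module.Basis.tensorProduct_repr_tmul_apply, hw, map_smul]; rfl⟩
  exact (hc.dvd_or_dvd hdvd).elim hj hi

/-- Let `R` be an integral domain, `c ∈ R` a prime element,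
and `M`, `M′` free `R`-modules.  If `x ∈ M` with `x ∉ c • M` and `y ∈ M′` with
`y ∉ c • M′`, then `x ⊗ y ∉ c • (M ⊗[R] M′)`. -/
theorem stmt16 {R : Type*} [CommRing R] [IsDomain R] (c : R) (hc : Prime c)
    {M M' : Type*} [AddCommGroup M] [Module R M] [AddCommGroup M'] [Module R M']
    [Module.Free R M] [Module.Free R M']
    (x : M) (y : M')
    (hx : ¬∃ m : M, x = c • m) (hy : ¬∃ m : M', y = c • m) :
    ¬∃ w : M ⊗[R] M', x ⊗ₜ[R] y = c • w :=
  stmt16_general c hc x y hx hy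
end

section
/- Let F be a field of characteristic ≠ 2, R = F[h] the polynomial ring, and A = R[X]/(X² − (h/2)²), a free R-module with basis (1, X). For r : ℕ and S ⊆ Fin r, let e_S ∈ A^{⊗r} be the basis tensor whose i-th factor is 1 if i ∈ S and X if i ∉ S. For any signs ε : Fin r → {1, −1}, set α = ⊗ᵢ (X + ε(i)·(h/2)) and β = ⊗ᵢ (X − ε(i)·(h/2)) in A^{⊗r}. Then α + β = 2 · Σ_{S, |S| even} (∏_{i ∈ S} ε(i)) · (h/2)^{|S|} · e_S and α − β = h · Σ_{S, |S| odd} (∏_{i ∈ S} ε(i)) · 2^{1−|S|} · h^{|S|−1} · e_S. In particular, ξ := (α + β)/2 and η := (α − β)/h are well-defined elements of A^{⊗r}, ξ is supported on basis tensors e_S with |S| even, η on those with |S| odd, and all coordinates of ξ and η with respect to the basis (e_S) lie in the subring F[h²] ⊆ F[h]. -/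
/-!
Multilinearity expands `α` as `∑_S (∏_{i∈S} ε(i)) (h/2)^{|S|} e_S`, and `β` is the same sum
with the extra sign `(-1)^{|S|}`. Hence `α + β` keeps twice the even terms and `α - β` twice
the odd ones, where `2 (h/2)^{|S|} = h · 2^{1-|S|} h^{|S|-1}`. The coefficients are `±1` times
a constant times an even power of `h`, so they lie in `F[h²]`.
-/

open Polynomial
open scoped TensorProduct

/-- The polynomial `h/2 = (2⁻¹ : F)·h` in `R = F[h]` (where `h` is the variable). -/
noncomputable def halfh (F : Type*) [Field F] : Polynomial F :=
  Polynomial.C (2⁻¹ : F) * Polynomial.X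

/-- The Bar-Natan algebra `A = R[X]/(X² − (h/2)²)` over `R = F[h]`. -/
noncomputable abbrev ABN (F : Type*) [Field F] : Type _ :=
  AdjoinRoot ((X : (Polynomial F)[X]) ^ 2 - C (halfh F ^ 2))

/-- The image of the variable `X` in `A = R[X]/(X² − (h/2)²)`. -/
noncomputable def XBN (F : Type*) [Field F] : ABN F :=
  AdjoinRoot.root _

/-- The basis tensor `e_S ∈ A^{⊗r}` whose `i`-th factor is `1` if `i ∈ S` and
`X` if `i ∉ S`. -/
noncomputable def eS (F : Type*) [Field F] (r : ℕ) (S : Finset (Fin r)) :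
    ⨂[Polynomial F] _ : Fin r, ABN F :=
  ⨂ₜ[Polynomial F] i, (if i ∈ S then 1 else XBN F)

section TensorPower

variable {R A ι : Type*} [CommSemiring R] [Semiring A] [Algebra R A] [Fintype ι] [DecidableEq ι]

theorem tprod_add_algebraMap_eq_sum (x : A) (c : ι → R) :
    (⨂ₜ[R] i, (x + algebraMap R A (c i))) =
      ∑ S : Finset ι, (∏ i ∈ S, c i) • ⨂ₜ[R] i, (if i ∈ S then (1 : A) else x) := by
  have hsplit : (fun i => x + algebraMap R A (c i)) =
      (fun i => algebraMap R A (c i)) + fun _ => x :=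
    funext fun i => add_comm _ _
  rw [hsplit, MultilinearMap.map_add_univ]
  refine Finset.sum_congr rfl fun S _ => ?_
  have hpiece : S.piecewise (fun i => algebraMap R A (c i)) (fun _ => x) =
      fun i => (if i ∈ S then c i else 1) • (if i ∈ S then (1 : A) else x) := by
    funext i
    by_cases hi : i ∈ S <;> simp [hi, Algebra.algebraMap_eq_smul_one]
  rw [hpiece, MultilinearMap.map_smul_univ, Finset.prod_ite_mem, Finset.univ_inter]

end TensorPower

section ParitySplit

variable {α R M : Type*} [Ring R] [AddCommGroup M] [Module R M]

theorem sum_add_sum_neg_one_pow_smul (s : Finset α) (k : α → ℕ) (f : α → M) :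
    ∑ x ∈ s, f x + ∑ x ∈ s, (-1 : R) ^ k x • f x =
      (2 : R) • ∑ x ∈ s with Even (k x), f x := by
  rw [← Finset.sum_add_distrib, Finset.sum_filter, Finset.smul_sum]
  refine Finset.sum_congr rfl fun x _ => ?_
  rcases Nat.even_or_odd (k x) with hk | hk
  · simp [hk, hk.neg_one_pow, two_smul]
  · simp [Nat.not_even_iff_odd.mpr hk, hk.neg_one_pow]

theorem sum_sub_sum_neg_one_pow_smul (s : Finset α) (k : α → ℕ) (f : α → M) :
    ∑ x ∈ s, f x - ∑ x ∈ s, (-1 : R) ^ k x • f x =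
      (2 : R) • ∑ x ∈ s with Odd (k x), f x := by
  rw [← Finset.sum_sub_distrib, Finset.sum_filter, Finset.smul_sum]
  refine Finset.sum_congr rfl fun x _ => ?_
  rcases Nat.even_or_odd (k x) with hk | hk
  · simp [Nat.not_odd_iff_even.mpr hk, hk.neg_one_pow]
  · simp [hk, hk.neg_one_pow, two_smul]

end ParitySplit

section EvenSubalgebra

variable {F : Type*} [Field F]

theorem X_pow_mem_adjoin_X_sq {k : ℕ} (hk : Even k) :
    (X : F[X]) ^ k ∈ Algebra.adjoin F {(X : F[X]) ^ 2} := by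
  obtain ⟨m, rfl⟩ := hk
  rw [← two_mul, pow_mul]
  exact pow_mem (Algebra.subset_adjoin (Set.mem_singleton _)) m

theorem C_mem_adjoin (s : Set F[X]) (c : F) : C c ∈ Algebra.adjoin F s :=
  Subalgebra.algebraMap_mem _ c

theorem halfh_pow_mem_adjoin_X_sq {k : ℕ} (hk : Even k) :
    halfh F ^ k ∈ Algebra.adjoin F {(X : F[X]) ^ 2} := by
  rw [halfh, mul_pow, ← map_pow]
  exact mul_mem (C_mem_adjoin _ _) (X_pow_mem_adjoin_X_sq hk)

theorem prod_mem_of_forall_eq_one_or_neg_one {ι S : Type*} [CommRing S]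
    [Algebra F S] (T : Subalgebra F S) (s : Finset ι) {c : ι → S}
    (hc : ∀ i, c i = 1 ∨ c i = -1) : ∏ i ∈ s, c i ∈ T :=
  Subalgebra.prod_mem _ fun i _ => by
    rcases hc i with h | h <;> rw [h]
    exacts [one_mem T, neg_mem (one_mem T)]

end EvenSubalgebra

theorem two_mul_halfh_pow {F : Type*} [Field F] (hF : (2 : F) ≠ 0) {k : ℕ} (hk : 0 < k)
    (p : F[X]) :
    2 * (p * halfh F ^ k) = X * (p * C ((2 : F) ^ (1 - (k : ℤ))) * X ^ (k - 1)) := by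
  have hzpow : (2 : F) ^ (1 - (k : ℤ)) = 2 * 2⁻¹ ^ k := by
    rw [zpow_sub₀ hF, zpow_one, zpow_natCast, inv_pow, div_eq_mul_inv]
  have hXpow : (X : F[X]) ^ k = X * X ^ (k - 1) := by
    rw [← pow_succ', Nat.sub_add_cancel hk]
  rw [hzpow, halfh, mul_pow, ← map_pow, hXpow, map_mul, map_ofNat]
  ring

/-- Over `R = F[h]` (`char F ≠ 2`) and `A = R[X]/(X² − (h/2)²)`,
for signs `ε : Fin r → {1, −1}` set `α = ⊗ᵢ (X + ε(i)·(h/2))` and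
`β = ⊗ᵢ (X − ε(i)·(h/2))` in `A^{⊗r}`.  Then
`α + β = 2 · Σ_{|S| even} (∏_{i∈S} ε(i)) (h/2)^{|S|} e_S` and
`α − β = h · Σ_{|S| odd} (∏_{i∈S} ε(i)) 2^{1−|S|} h^{|S|−1} e_S`.  In particular
`ξ = (α+β)/2` and `η = (α−β)/h` are well defined, supported on even (resp. odd)
basis tensors, and all their coordinates lie in the subring `F[h²] ⊆ F[h]`. -/
theorem stmt19 {F : Type*} [Field F] (hF : (2 : F) ≠ 0) (r : ℕ)
    (sgn : Fin r → Polynomial F) (hsgn : ∀ i, sgn i = 1 ∨ sgn i = -1)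
    (α β : ⨂[Polynomial F] _ : Fin r, ABN F)
    (hα : α = ⨂ₜ[Polynomial F] i,
      (XBN F + algebraMap (Polynomial F) (ABN F) (sgn i * halfh F)))
    (hβ : β = ⨂ₜ[Polynomial F] i,
      (XBN F - algebraMap (Polynomial F) (ABN F) (sgn i * halfh F))) :
    α + β = (2 : Polynomial F) •
        ∑ S ∈ Finset.univ.filter (fun S : Finset (Fin r) => Even S.card),
          ((∏ i ∈ S, sgn i) * halfh F ^ S.card) • eS F r S ∧
      α - β = (Polynomial.X : Polynomial F) •
        ∑ S ∈ Finset.univ.filter (fun S : Finset (Fin r) => Odd S.card),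
          ((∏ i ∈ S, sgn i) * Polynomial.C ((2 : F) ^ (1 - (S.card : ℤ))) *
            Polynomial.X ^ (S.card - 1)) • eS F r S ∧
      (∃ ξ η : ⨂[Polynomial F] _ : Fin r, ABN F,
        α + β = (2 : Polynomial F) • ξ ∧
          α - β = (Polynomial.X : Polynomial F) • η) ∧
      (∀ S : Finset (Fin r), Even S.card →
        (∏ i ∈ S, sgn i) * halfh F ^ S.card ∈
          Algebra.adjoin F {(Polynomial.X : Polynomial F) ^ 2}) ∧
      (∀ S : Finset (Fin r), Odd S.card →
        (∏ i ∈ S, sgn i) * Polynomial.C ((2 : F) ^ (1 - (S.card : ℤ))) *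
            Polynomial.X ^ (S.card - 1) ∈
          Algebra.adjoin F {(Polynomial.X : Polynomial F) ^ 2}) := by
  set T : Finset (Fin r) → ⨂[Polynomial F] _ : Fin r, ABN F :=
    fun S => ((∏ i ∈ S, sgn i) * halfh F ^ S.card) • eS F r S with hT
  have hα_sum : α = ∑ S, T S := by
    rw [hα, tprod_add_algebraMap_eq_sum]
    simp only [hT, Finset.prod_mul_distrib, Finset.prod_const]
    rfl
  have hβ_sum : β = ∑ S, (-1 : Polynomial F) ^ S.card • T S := by
    simp only [hβ, sub_eq_add_neg, ← map_neg, tprod_add_algebraMap_eq_sum, Finset.prod_neg,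
      Finset.prod_mul_distrib, Finset.prod_const, hT, smul_smul]
    rfl
  have hsum : α + β = (2 : Polynomial F) • ∑ S with Even S.card, T S := by
    rw [hα_sum, hβ_sum, sum_add_sum_neg_one_pow_smul]
  have hdiff : α - β = (X : Polynomial F) • ∑ S with Odd S.card,
      ((∏ i ∈ S, sgn i) * C ((2 : F) ^ (1 - (S.card : ℤ))) * X ^ (S.card - 1)) •
        eS F r S := by
    rw [hα_sum, hβ_sum, sum_sub_sum_neg_one_pow_smul, Finset.smul_sum, Finset.smul_sum]
    refine Finset.sum_congr rfl fun S hS => ?_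
    rw [hT, smul_smul, smul_smul,
      two_mul_halfh_pow hF (Finset.mem_filter.mp hS).2.pos]
  have hsgn_mem S := prod_mem_of_forall_eq_one_or_neg_one
    (Algebra.adjoin F {(X : Polynomial F) ^ 2}) S hsgn
  refine ⟨hsum, hdiff, ⟨_, _, hsum, hdiff⟩, fun S hS => ?_, fun S hS => ?_⟩
  · exact mul_mem (hsgn_mem S) (halfh_pow_mem_adjoin_X_sq hS)
  · exact mul_mem (mul_mem (hsgn_mem S) (C_mem_adjoin _ _))
      (X_pow_mem_adjoin_X_sq (Nat.Odd.sub_odd hS odd_one))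
end
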